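/- arXiv:1208.1002 — 3 statements merged into one kernel-verified Lean document; each statement's English description precedes it below -/
import Mathlib

section
/- Let G be a countable group and {F_n} a sequence of finite subsets of G each containing the identity. If {F_n} does not satisfy the Besicovitch covering property, then for every k there exists an incremental sequence of translates (F_{n(i)}·g_i)_{i=1}^k of multiplicity at least k, i.e., there exist indices n(1) ≥ n(2) ≥ … ≥ n(k) and group elements g_1, …, g_k with g_j ∉ ⋃_{i<j} F_{n(i)}g_i, such that some point of G lies in at least k of the sets F_{n(i)}g_i. -/
/-! Failure of the Besicovitch property yields a finite `A ⊆ G` and a radius assignment `ν` for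
which every subcover of `A` by the translates `F (ν g) * g` has a point of multiplicity `> k`.
The greedy subcover, which repeatedly picks a not yet covered point of maximal `ν`, is an
incremental sequence; the translates through a point of high multiplicity form an incremental
subsequence of length `k`, all of whose members contain that point. -/

open Finset Pointwise

/-- The Besicovitch covering property for a sequence of finite subsets of a group:
there is a constant `C` such that for every finite `A ⊆ G` and every assignment
`g ↦ ν g`, some subset `A' ⊆ A` is such that the right-translates `F (ν g) * g`,
`g ∈ A'`, cover `A` with multiplicity at most `C`. -/
def IsBesicovitch {G : Type*} [Group G] [DecidableEq G] (F : ℕ → Finset G) : Prop :=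
  ∃ C : ℕ, ∀ (A : Finset G) (ν : G → ℕ), ∃ A' ⊆ A,
    (∀ a ∈ A, ∃ g ∈ A', a ∈ (F (ν g)).image (· * g)) ∧
    ∀ h : G, (A'.filter (fun g => h ∈ (F (ν g)).image (· * g))).card ≤ C

section Incremental

variable {G : Type*} [Group G] [DecidableEq G]

structure IsIncremental (F : ℕ → Finset G) {m : ℕ} (n : Fin m → ℕ) (g : Fin m → G) :
    Prop where
  antitone : Antitone n
  notMem_image : ∀ j i, i < j → g j ∉ (F (n i)).image (· * g i)

namespace IsIncremental

variable {F : ℕ → Finset G} {m : ℕ} {n : Fin m → ℕ} {g : Fin m → G}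

theorem of_fin_zero (F : ℕ → Finset G) (n : Fin 0 → ℕ) (g : Fin 0 → G) :
    IsIncremental F n g :=
  ⟨fun i => i.elim0, fun j => j.elim0⟩

theorem cons (hinc : IsIncremental F n g) {N : ℕ} {a : G} (hn : ∀ i, n i ≤ N)
    (hg : ∀ i, g i ∉ (F N).image (· * a)) :
    IsIncremental F (Fin.cons N n : Fin (m + 1) → ℕ) (Fin.cons a g) where
  antitone i j hij := by
    cases j using Fin.cases with
    | zero => rw [Fin.le_zero_iff.1 hij]
    | succ j =>
      cases i using Fin.cases with
      | zero => simpa using hn j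
      | succ i => simpa using hinc.antitone (Fin.succ_le_succ_iff.1 hij)
  notMem_image j i hij := by
    cases j using Fin.cases with
    | zero => exact absurd hij (Fin.not_lt_zero i)
    | succ j =>
      cases i using Fin.cases with
      | zero => simpa using hg j
      | succ i => simpa using hinc.notMem_image j i (Fin.succ_lt_succ_iff.1 hij)

theorem comp (hinc : IsIncremental F n g) {k : ℕ} (e : Fin k ↪o Fin m) :
    IsIncremental F (n ∘ e) (g ∘ e) :=
  ⟨hinc.antitone.comp_monotone e.monotone,
    fun _ _ hij => hinc.notMem_image _ _ (e.strictMono hij)⟩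

end IsIncremental

theorem exists_isIncremental_cover {F : ℕ → Finset G} (hone : ∀ m, (1 : G) ∈ F m)
    (ν : G → ℕ) (A : Finset G) :
    ∃ (m : ℕ) (g : Fin m → G), IsIncremental F (ν ∘ g) g ∧ (∀ i, g i ∈ A) ∧
      ∀ a ∈ A, ∃ i, a ∈ (F (ν (g i))).image (· * g i) := by
  induction A using Finset.strongInduction with
  | H A ih =>
  rcases A.eq_empty_or_nonempty with rfl | hA
  · exact ⟨0, Fin.elim0, .of_fin_zero .., fun i => i.elim0, by simp⟩
  obtain ⟨a, haA, hmax⟩ := A.exists_max_image ν hA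
  set Fa := (F (ν a)).image (· * a)
  have haFa : a ∈ Fa := mem_image.2 ⟨1, hone _, one_mul a⟩
  obtain ⟨m, g, hinc, hgA, hcov⟩ :=
    ih (A \ Fa) (sdiff_lt_left.2 (not_disjoint_iff.2 ⟨a, haFa, haA⟩))
  simp only [mem_sdiff] at hgA hcov
  refine ⟨m + 1, Fin.cons a g, ?_, Fin.forall_fin_succ.2 ⟨haA, fun i => (hgA i).1⟩, ?_⟩
  · rw [Fin.comp_cons]
    exact hinc.cons (fun i => hmax _ (hgA i).1) (fun i => (hgA i).2)
  · intro b hb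
    by_cases hbFa : b ∈ Fa
    · exact ⟨0, hbFa⟩
    · obtain ⟨i, hi⟩ := hcov b ⟨hb, hbFa⟩
      exact ⟨i.succ, hi⟩

end Incremental

theorem besicovitch_fails_implies_high_multiplicity_incremental_general
    {G : Type*} [Group G] [DecidableEq G]
    (F : ℕ → Finset G) (hone : ∀ m, (1 : G) ∈ F m)
    (hB : ¬ IsBesicovitch F) :
    ∀ k : ℕ, ∃ (n : Fin k → ℕ) (g : Fin k → G),
      (∀ i j : Fin k, i ≤ j → n j ≤ n i) ∧
      (∀ j i : Fin k, i < j → g j ∉ (F (n i)).image (· * g i)) ∧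
      ∃ h : G, ∀ i : Fin k, h ∈ (F (n i)).image (· * g i) := by
  intro k
  simp only [IsBesicovitch, not_exists, not_forall, not_and, not_le] at hB
  obtain ⟨A, ν, hA⟩ := hB k
  obtain ⟨m, g, hinc, hgA, hcov⟩ := exists_isIncremental_cover hone ν A
  obtain ⟨h, hh⟩ := hA (univ.image g) (image_subset_iff.2 fun i _ => hgA i)
    fun a ha => let ⟨i, hi⟩ := hcov a ha; ⟨g i, mem_image_of_mem g (mem_univ i), hi⟩
  set T := univ.filter fun i => h ∈ (F (ν (g i))).image (· * g i)
  have hkT : k ≤ #T := by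
    rw [filter_image] at hh
    exact (hh.trans_le card_image_le).le
  set e := T.orderEmbOfCardLe hkT
  have hsubseq := hinc.comp e
  exact ⟨_, _, hsubseq.antitone, hsubseq.notMem_image, h,
    fun i => (mem_filter.1 (T.orderEmbOfCardLe_mem hkT i)).2⟩

/-- If `{F n}` (finite sets containing the identity in a countable group) is not
Besicovitch, then for every `k` there is an incremental sequence of translates
`F (n i) * g i`, `i = 1, …, k`, of multiplicity at least `k`. -/
theorem besicovitch_fails_implies_high_multiplicity_incremental
    {G : Type*} [Group G] [Countable G] [DecidableEq G]
    (F : ℕ → Finset G) (hone : ∀ m, (1 : G) ∈ F m)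
    (hB : ¬ IsBesicovitch F) :
    ∀ k : ℕ, ∃ (n : Fin k → ℕ) (g : Fin k → G),
      (∀ i j : Fin k, i ≤ j → n j ≤ n i) ∧
      (∀ j i : Fin k, i < j → g j ∉ (F (n i)).image (· * g i)) ∧
      ∃ h : G, ∀ i : Fin k, h ∈ (F (n i)).image (· * g i) :=
  besicovitch_fails_implies_high_multiplicity_incremental_general F hone hB
end

section
/- Let G be a countable group and {F_n} a sequence of finite, symmetric subsets of G, each containing the identity, with F_1 ⊆ F_2 ⊆ …. If for every k there exists an incremental sequence (F_{n(i)}g_i)_{i=1}^k of multiplicity at least k, then {F_n} does not satisfy the Besicovitch covering property. -/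
/-!
Suppose `C` were a Besicovitch constant and take an incremental sequence `(F (n i) * g i)` of
length `C + 1` all of whose members contain a common point `h`. Symmetry and monotonicity of the
`F n` upgrade incrementality to: no member contains the center of another one. So any subfamily
covering the centers must be the whole sequence, and it has multiplicity `C + 1` at `h`.
-/

open Finset Pointwise

section Translates

variable {G : Type*} [Group G] [DecidableEq G]

lemma self_mem_image_mul_right {s : Finset G} (hs : (1 : G) ∈ s) (g : G) :
    g ∈ s.image (· * g) :=
  mem_image.mpr ⟨1, hs, one_mul g⟩

lemma mem_image_mul_right_comm {s : Finset G} (hs : ∀ x ∈ s, x⁻¹ ∈ s) {a b : G}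
    (h : a ∈ s.image (· * b)) : b ∈ s.image (· * a) := by
  obtain ⟨x, hx, rfl⟩ := mem_image.mp h
  exact mem_image.mpr ⟨x⁻¹, hs x hx, by group⟩

end Translates

section Incremental

variable {G : Type*} [Group G] [DecidableEq G] {F : ℕ → Finset G} {k : ℕ}
  {n : Fin k → ℕ} {g : Fin k → G}

lemma injective_of_incremental (hone : ∀ m, (1 : G) ∈ F m)
    (hg : ∀ j i : Fin k, i < j → g j ∉ (F (n i)).image (· * g i)) :
    Function.Injective g := by
  intro i j hij
  by_contra hne
  rcases lt_or_gt_of_ne hne with hlt | hlt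
  · exact hg j i hlt (hij ▸ self_mem_image_mul_right (hone _) (g i))
  · exact hg i j hlt (hij ▸ self_mem_image_mul_right (hone _) (g j))

/-- An earlier center in a later (hence smaller) translate would, by symmetry, put the later
center in the earlier translate. -/
lemma notMem_image_mul_right_of_incremental (hsym : ∀ m, ∀ x ∈ F m, x⁻¹ ∈ F m)
    (hmono : Monotone F) (hn : ∀ i j : Fin k, i ≤ j → n j ≤ n i)
    (hg : ∀ j i : Fin k, i < j → g j ∉ (F (n i)).image (· * g i)) {i j : Fin k}
    (hij : i ≠ j) :
    g j ∉ (F (n i)).image (· * g i) := by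
  rcases lt_or_gt_of_ne hij with hlt | hlt
  · exact hg j i hlt
  · intro hmem
    exact hg i j hlt <| image_subset_image (hmono (hn j i hlt.le))
      (mem_image_mul_right_comm (hsym (n i)) hmem)

end Incremental

lemma IsBesicovitch.exists_card_le {G : Type*} [Group G] [DecidableEq G] {F : ℕ → Finset G}
    (hF : IsBesicovitch F) :
    ∃ C : ℕ, ∀ (k : ℕ) (n : Fin k → ℕ) (g : Fin k → G), Function.Injective g →
      (∀ i j, i ≠ j → g j ∉ (F (n i)).image (· * g i)) →
      ∀ h : G, (∀ i, h ∈ (F (n i)).image (· * g i)) → k ≤ C := by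
  obtain ⟨C, hC⟩ := hF
  refine ⟨C, fun k n g hinj hsep h hh => ?_⟩
  have hν : ∀ i, Function.extend g n 0 (g i) = n i := hinj.extend_apply n 0
  obtain ⟨A', hA', hcover, hbound⟩ := hC (univ.image g) (Function.extend g n 0)
  have hcenters : ∀ j, g j ∈ A' := by
    intro j
    obtain ⟨c, hc, hjc⟩ := hcover (g j) (mem_image_of_mem g (mem_univ j))
    obtain ⟨i, -, rfl⟩ := mem_image.mp (hA' hc)
    rw [hν] at hjc
    obtain rfl : i = j := by_contra fun hij => hsep i j hij hjc
    exact hc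
  calc k = (univ.image g).card := by
        rw [card_image_of_injective _ hinj, card_univ, Fintype.card_fin]
    _ ≤ (A'.filter fun c => h ∈ (F (Function.extend g n 0 c)).image (· * c)).card := by
        refine card_le_card fun c hc => ?_
        obtain ⟨i, -, rfl⟩ := mem_image.mp hc
        exact mem_filter.mpr ⟨hcenters i, (hν i).symm ▸ hh i⟩
    _ ≤ C := hbound h

theorem high_multiplicity_incremental_implies_not_besicovitch_general
    {G : Type*} [Group G] [DecidableEq G]
    (F : ℕ → Finset G) (hone : ∀ m, (1 : G) ∈ F m)
    (hsym : ∀ m, ∀ x ∈ F m, x⁻¹ ∈ F m)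
    (hmono : Monotone F)
    (hinc : ∀ k : ℕ, ∃ (n : Fin k → ℕ) (g : Fin k → G),
      (∀ i j : Fin k, i ≤ j → n j ≤ n i) ∧
      (∀ j i : Fin k, i < j → g j ∉ (F (n i)).image (· * g i)) ∧
      ∃ h : G, ∀ i : Fin k, h ∈ (F (n i)).image (· * g i)) :
    ¬ IsBesicovitch F := by
  intro hF
  obtain ⟨C, hC⟩ := hF.exists_card_le
  obtain ⟨n, g, hn, hg, h, hh⟩ := hinc (C + 1)
  have := hC (C + 1) n g (injective_of_incremental hone hg)
    (fun _ _ hij => notMem_image_mul_right_of_incremental hsym hmono hn hg hij) h hh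
  omega

/-- If `{F n}` are finite, symmetric, increasing sets containing the identity in a
countable group, and for every `k` there is an incremental sequence of translates of
multiplicity at least `k`, then `{F n}` is not Besicovitch. -/
theorem high_multiplicity_incremental_implies_not_besicovitch
    {G : Type*} [Group G] [Countable G] [DecidableEq G]
    (F : ℕ → Finset G) (hone : ∀ m, (1 : G) ∈ F m)
    (hsym : ∀ m, ∀ x ∈ F m, x⁻¹ ∈ F m)
    (hmono : Monotone F)
    (hinc : ∀ k : ℕ, ∃ (n : Fin k → ℕ) (g : Fin k → G),
      (∀ i j : Fin k, i ≤ j → n j ≤ n i) ∧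
      (∀ j i : Fin k, i < j → g j ∉ (F (n i)).image (· * g i)) ∧
      ∃ h : G, ∀ i : Fin k, h ∈ (F (n i)).image (· * g i)) :
    ¬ IsBesicovitch F :=
  high_multiplicity_incremental_implies_not_besicovitch_general F hone hsym hmono hinc
end

section
/- Let G be a finitely generated group whose balls satisfy c_1 n^c ≤ |B_n| ≤ c_2 n^c for constants c_1, c_2, c > 0. Then there is a constant C (depending only on c_1, c_2, c) such that for all k, N ≥ 1: any incremental sequence (B_{r(i)}g_i)_{i=1}^k with radii r(i) ∈ [N, 2N] has multiplicity at most C. -/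
open Finset Pointwise

/-!
The half-balls `B_{⌊r(i)/2⌋} g_i` of an incremental sequence are pairwise disjoint: for `i < j`
we have `g_j ∉ B_{r(i)} g_i`, while `⌊r(i)/2⌋ + ⌊r(j)/2⌋ ≤ r(i)` because the radii decrease.
The half-balls of the balls through `h` lie in `B_{3N} h` and each has at least `|B_{⌊N/2⌋}|`
elements, so the multiplicity is at most `|B_{3N}| / |B_{⌊N/2⌋}| ≤ c₂ 12^c / min 1 c₁`; the
`min` absorbs the case `N = 1`, where `B_0 = {1}` is not covered by the growth hypothesis.
-/

namespace Finset

theorem card_mul_le_card_of_pairwiseDisjoint {ι α : Type*} [DecidableEq α]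
    {s : Finset ι} {f : ι → Finset α} {t : Finset α} {m : ℕ}
    (hdisj : (s : Set ι).PairwiseDisjoint f) (hsub : ∀ i ∈ s, f i ⊆ t)
    (hcard : ∀ i ∈ s, m ≤ #(f i)) :
    #s * m ≤ #t :=
  calc #s * m ≤ ∑ i ∈ s, #(f i) := by simpa using card_nsmul_le_sum s _ m hcard
    _ = #(s.biUnion f) := (card_biUnion hdisj).symm
    _ ≤ #t := card_le_card (biUnion_subset.2 hsub)

theorem min_one_mul_div_four_pow_le_card_pow_half {M : Type*} [Monoid M] [DecidableEq M]
    {A : Finset M} {c₁ : ℝ} {c : ℕ} (hc₁ : 0 ≤ c₁)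
    (hgrowth : ∀ n : ℕ, 1 ≤ n → c₁ * (n : ℝ) ^ c ≤ #(A ^ n)) {N : ℕ} (hN : 1 ≤ N) :
    min 1 c₁ * ((N : ℝ) / 4) ^ c ≤ #(A ^ (N / 2)) := by
  rcases hN.eq_or_lt with rfl | hN
  · simp only [Nat.cast_one, Nat.reduceDiv, pow_zero, card_one]
    exact mul_le_one₀ (min_le_left _ _) (by positivity) (pow_le_one₀ (by norm_num) (by norm_num))
  have hN4 : (N : ℝ) / 4 ≤ (N / 2 : ℕ) := by
    have : (N : ℝ) ≤ 4 * (N / 2 : ℕ) := by exact_mod_cast (by omega : N ≤ 4 * (N / 2))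
    linarith
  calc min 1 c₁ * ((N : ℝ) / 4) ^ c ≤ c₁ * ((N / 2 : ℕ) : ℝ) ^ c := by
        gcongr
        exact min_le_right _ _
    _ ≤ #(A ^ (N / 2)) := hgrowth _ (by omega)

section Group

variable {G : Type*} [Group G] [DecidableEq G] {A : Finset G}

theorem inv_mem_pow_of_forall_inv_mem (hsym : ∀ x ∈ A, x⁻¹ ∈ A) {n : ℕ} {x : G}
    (hx : x ∈ A ^ n) : x⁻¹ ∈ A ^ n := by
  have hA : A⁻¹ = A := by
    ext y
    exact ⟨fun hy => inv_inv y ▸ hsym _ (mem_inv'.1 hy), fun hy => mem_inv'.2 (hsym y hy)⟩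
  rw [← mem_inv', ← inv_pow, hA]
  exact hx

theorem disjoint_image_mul_pow_of_notMem (hsym : ∀ x ∈ A, x⁻¹ ∈ A) (hone : 1 ∈ A)
    {a b r : ℕ} (hab : a + b ≤ r) {x y : G} (hy : y ∉ (A ^ r).image (· * x)) :
    Disjoint ((A ^ a).image (· * x)) ((A ^ b).image (· * y)) := by
  refine disjoint_left.2 ?_
  rintro _ hux hvy
  obtain ⟨u, hu, rfl⟩ := mem_image.1 hux
  obtain ⟨v, hv, hvy⟩ := mem_image.1 hvy
  have hvu : v⁻¹ * u ∈ A ^ r :=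
    pow_subset_pow_right hone (by omega)
      (pow_add A b a ▸ mul_mem_mul (inv_mem_pow_of_forall_inv_mem hsym hv) hu)
  exact hy (mem_image.2 ⟨v⁻¹ * u, hvu, by rw [mul_assoc, ← hvy, inv_mul_cancel_left]⟩)

open Function in
theorem pairwise_disjoint_image_mul_pow_half {ι : Type*} [LinearOrder ι]
    (hsym : ∀ x ∈ A, x⁻¹ ∈ A) (hone : 1 ∈ A) {r : ι → ℕ} {g : ι → G} (hr : Antitone r)
    (hinc : ∀ j i, i < j → g j ∉ (A ^ r i).image (· * g i)) :
    Pairwise (Disjoint on fun i => (A ^ (r i / 2)).image (· * g i)) := by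
  refine (pairwise_disjoint_on _).2 fun i j hij => ?_
  have := hr hij.le
  exact disjoint_image_mul_pow_of_notMem hsym hone (by omega) (hinc j i hij)

theorem image_mul_pow_subset_of_mem (hsym : ∀ x ∈ A, x⁻¹ ∈ A) {a r : ℕ} {x h : G}
    (hh : h ∈ (A ^ r).image (· * x)) :
    (A ^ a).image (· * x) ⊆ (A ^ (a + r)).image (· * h) := by
  obtain ⟨b, hb, rfl⟩ := mem_image.1 hh
  intro _ hux
  obtain ⟨u, hu, rfl⟩ := mem_image.1 hux
  refine mem_image.2 ⟨u * b⁻¹, ?_, by group⟩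
  exact pow_add A a r ▸ mul_mem_mul hu (inv_mem_pow_of_forall_inv_mem hsym hb)

theorem card_filter_mem_mul_card_pow_half_le {ι : Type*} [Fintype ι] [LinearOrder ι]
    (hsym : ∀ x ∈ A, x⁻¹ ∈ A) (hone : 1 ∈ A) {N : ℕ} {r : ι → ℕ} {g : ι → G}
    (hNr : ∀ i, N ≤ r i) (hr2N : ∀ i, r i ≤ 2 * N) (hr : Antitone r)
    (hinc : ∀ j i, i < j → g j ∉ (A ^ r i).image (· * g i)) (h : G) :
    #{i | h ∈ (A ^ r i).image (· * g i)} * #(A ^ (N / 2)) ≤ #(A ^ (3 * N)) := by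
  rw [← card_image_of_injective (A ^ (3 * N)) (mul_left_injective h)]
  refine card_mul_le_card_of_pairwiseDisjoint
    ((pairwise_disjoint_image_mul_pow_half hsym hone hr hinc).set_pairwise _) ?_ ?_
  · intro i hi
    refine (image_mul_pow_subset_of_mem (a := r i / 2) hsym (mem_filter.1 hi).2).trans ?_
    exact image_subset_image (pow_subset_pow_right hone (by have := hr2N i; omega))
  · intro i _
    rw [card_image_of_injective _ (mul_left_injective (g i))]
    exact card_le_card (pow_subset_pow_right hone (Nat.div_le_div_right (hNr i)))

end Group

end Finset

theorem bounded_radius_incremental_multiplicity_general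
    (c₁ c₂ : ℝ) (c : ℕ) (hc₁ : 0 < c₁) :
    ∃ C : ℕ, ∀ (G : Type) [Group G] [DecidableEq G] (A : Finset G),
      (∀ x ∈ A, x⁻¹ ∈ A) → (1 : G) ∈ A →
      (∀ n : ℕ, 1 ≤ n → c₁ * (n : ℝ) ^ c ≤ ((A ^ n).card : ℝ) ∧
        ((A ^ n).card : ℝ) ≤ c₂ * (n : ℝ) ^ c) →
      ∀ (k N : ℕ), 1 ≤ k → 1 ≤ N →
      ∀ (r : Fin k → ℕ) (g : Fin k → G),
        (∀ i, N ≤ r i ∧ r i ≤ 2 * N) →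
        (∀ i j : Fin k, i ≤ j → r j ≤ r i) →
        (∀ j i : Fin k, i < j → g j ∉ (A ^ (r i)).image (· * g i)) →
        ∀ h : G,
          (Finset.univ.filter (fun i : Fin k => h ∈ (A ^ (r i)).image (· * g i))).card ≤ C := by
  refine ⟨⌈c₂ * 12 ^ c / min 1 c₁⌉₊, ?_⟩
  intro G _ _ A hsym hone hgrowth k N _ hN r g hrange hmono hinc h
  set m := #{i | h ∈ (A ^ r i).image (· * g i)}
  have hcount : m * #(A ^ (N / 2)) ≤ #(A ^ (3 * N)) :=
    card_filter_mem_mul_card_pow_half_le hsym hone (fun i => (hrange i).1) (fun i => (hrange i).2)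
      (fun i j => hmono i j) hinc h
  have hlower := min_one_mul_div_four_pow_le_card_pow_half hc₁.le (fun n hn => (hgrowth n hn).1) hN
  have hupper : (#(A ^ (3 * N)) : ℝ) ≤ c₂ * (3 * N : ℕ) ^ c := (hgrowth (3 * N) (by omega)).2
  have hbound : (m : ℝ) * min 1 c₁ * ((N : ℝ) / 4) ^ c ≤ c₂ * 12 ^ c * ((N : ℝ) / 4) ^ c :=
    calc (m : ℝ) * min 1 c₁ * ((N : ℝ) / 4) ^ c = m * (min 1 c₁ * ((N : ℝ) / 4) ^ c) := by ring
      _ ≤ m * #(A ^ (N / 2)) := by gcongr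
      _ ≤ #(A ^ (3 * N)) := by exact_mod_cast hcount
      _ ≤ c₂ * 12 ^ c * ((N : ℝ) / 4) ^ c := by
        rw [mul_assoc, ← mul_pow]; push_cast at hupper; convert hupper using 3; ring
  have hm : (m : ℝ) ≤ c₂ * 12 ^ c / min 1 c₁ := by
    rw [le_div_iff₀ (lt_min one_pos hc₁)]
    exact le_of_mul_le_mul_right hbound (by positivity)
  exact_mod_cast hm.trans (Nat.le_ceil _)

/-- In a finitely generated group of exact polynomial growth
`c₁ n^c ≤ |B n| ≤ c₂ n^c`, there is a constant `C` depending only on `c₁, c₂, c`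
such that any incremental sequence of balls `B (r i) * g i` with radii
`r i ∈ [N, 2N]` has multiplicity at most `C`. -/
theorem bounded_radius_incremental_multiplicity
    (c₁ c₂ : ℝ) (c : ℕ) (hc₁ : 0 < c₁) (hc₂ : 0 < c₂) (hc : 0 < c) :
    ∃ C : ℕ, ∀ (G : Type) [Group G] [DecidableEq G] (A : Finset G),
      (∀ x ∈ A, x⁻¹ ∈ A) → (1 : G) ∈ A →
      (∀ n : ℕ, 1 ≤ n → c₁ * (n : ℝ) ^ c ≤ ((A ^ n).card : ℝ) ∧
        ((A ^ n).card : ℝ) ≤ c₂ * (n : ℝ) ^ c) →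
      ∀ (k N : ℕ), 1 ≤ k → 1 ≤ N →
      ∀ (r : Fin k → ℕ) (g : Fin k → G),
        (∀ i, N ≤ r i ∧ r i ≤ 2 * N) →
        (∀ i j : Fin k, i ≤ j → r j ≤ r i) →
        (∀ j i : Fin k, i < j → g j ∉ (A ^ (r i)).image (· * g i)) →
        ∀ h : G,
          (Finset.univ.filter (fun i : Fin k => h ∈ (A ^ (r i)).image (· * g i))).card ≤ C :=
  bounded_radius_incremental_multiplicity_general c₁ c₂ c hc₁
end
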